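/- Let P_uniform = (d/m)·(1/n₁)·(1/n₂) and P_PHASE = (d·w_h/(d·w_h+(m−d)·w_l))·(w_h/(k₁·w_h+(n₁−k₁)·w_l))·(w_h/(k₂·w_h+(n₂−k₂)·w_l)), with w_h ≥ w_l > 0, 0 ≤ d ≤ m, m,n₁,n₂ > 0, and 0 ≤ kᵢ ≤ nᵢ. Then P_PHASE ≥ P_uniform. -/
import Mathlib

lemma phase_aux (wh wl : ℝ) (n k : ℕ) (hw : wh ≥ wl) (hl : wl > 0)
    (hn : 0 < n) (hk : k ≤ n) :
    (1 : ℝ) / n ≤ wh / (k * wh + (n - k : ℕ) * wl) := by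
  have hkn : ((n - k : ℕ) : ℝ) = (n : ℝ) - k := by
    push_cast [Nat.cast_sub hk]; ring
  have hkle : (k : ℝ) ≤ n := by exact_mod_cast hk
  have hden : (0 : ℝ) < k * wh + (n - k : ℕ) * wl := by
    have : (n : ℝ) * wl ≤ k * wh + (n - k : ℕ) * wl := by
      rw [hkn]; nlinarith [Nat.cast_nonneg (α := ℝ) k]
    have : (0 : ℝ) < n * wl := by positivity
    linarith
  rw [div_le_div_iff₀ (by exact_mod_cast hn) hden, hkn]
  nlinarith [mul_nonneg (Nat.cast_nonneg (α := ℝ) k) (sub_nonneg.2 hw), mul_nonneg (sub_nonneg.2 hkle) (sub_nonneg.2 hw)]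

theorem phase_path_prob_ge_uniform (wh wl : ℝ) (m d n₁ n₂ k₁ k₂ : ℕ)
    (hw : wh ≥ wl) (hl : wl > 0) (hm : 0 < m) (hd : d ≤ m)
    (hn₁ : 0 < n₁) (hn₂ : 0 < n₂) (hk₁ : k₁ ≤ n₁) (hk₂ : k₂ ≤ n₂) :
    (d * wh / (d * wh + (m - d : ℕ) * wl)) *
      (wh / (k₁ * wh + (n₁ - k₁ : ℕ) * wl)) *
      (wh / (k₂ * wh + (n₂ - k₂ : ℕ) * wl)) ≥
    ((d : ℝ) / m) * (1 / n₁) * (1 / n₂) := by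
  have hdm : ((m - d : ℕ) : ℝ) = (m : ℝ) - d := by
    push_cast [Nat.cast_sub hd]; ring
  have hdle : (d : ℝ) ≤ m := by exact_mod_cast hd
  have hden : (0 : ℝ) < d * wh + (m - d : ℕ) * wl := by
    have h1 : (m : ℝ) * wl ≤ d * wh + (m - d : ℕ) * wl := by
      rw [hdm]; nlinarith [Nat.cast_nonneg (α := ℝ) d]
    have h2 : (0 : ℝ) < m * wl := by positivity
    linarith
  have h1 : (d : ℝ) / m ≤ d * wh / (d * wh + (m - d : ℕ) * wl) := by
    rw [div_le_div_iff₀ (by exact_mod_cast hm) hden, hdm]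
    nlinarith [mul_nonneg (Nat.cast_nonneg (α := ℝ) d) (mul_nonneg (sub_nonneg.2 hdle) (sub_nonneg.2 hw))]
  have h2 := phase_aux wh wl n₁ k₁ hw hl hn₁ hk₁
  have h3 := phase_aux wh wl n₂ k₂ hw hl hn₂ hk₂
  have hd0 : (0 : ℝ) ≤ (d : ℝ) / m := by positivity
  have hn10 : (0 : ℝ) ≤ 1 / (n₁ : ℝ) := by positivity
  have hn20 : (0 : ℝ) ≤ 1 / (n₂ : ℝ) := by positivity
  have := mul_le_mul (mul_le_mul h1 h2 hn10 (le_trans hd0 h1)) h3 hn20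
    (mul_nonneg (le_trans hd0 h1) (le_trans hn10 h2))
  linarith
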